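/- arXiv:2603.13926 — 2 statements merged into one kernel-verified Lean document; each statement's English description precedes it below -/
import Mathlib

section
/- There exist positive constants C1 and C2 such that for all x, y in the strip S = ℝ × [0,2π] with x ≠ y, the kernel K(x,y) = |sin(x2-y2)| / (2(cosh(x1-y1) - cos(x2-y2))) satisfies K(x,y) ≤ (C1/|x-y|) · exp(-C2 |x-y|), where |x-y| denotes the distance on the cylinder (Euclidean distance with the second coordinate taken modulo 2π). -/
open Real

/-- The geodesic distance on the cylinder `ℝ × 𝕋` (circle of circumference `2π`). -/
noncomputable def cylDist (x1 x2 y1 y2 : ℝ) : ℝ :=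
  Real.sqrt ((x1 - y1) ^ 2 +
    (dist (x2 : AddCircle (2 * Real.pi)) (y2 : AddCircle (2 * Real.pi))) ^ 2)

lemma sq_le_sinh_sq (x : ℝ) : x ^ 2 ≤ Real.sinh x ^ 2 := by
  have h : |x| ≤ Real.sinh |x| := by
    rcases eq_or_lt_of_le (abs_nonneg x) with h | h
    · simp [← h]
    · exact (Real.self_lt_sinh_iff.2 h).le
  have h2 : x ^ 2 = |x| ^ 2 := (sq_abs x).symm
  have h3 : Real.sinh |x| ^ 2 = Real.sinh x ^ 2 := by
    rw [← Real.abs_sinh, sq_abs]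
  nlinarith [abs_nonneg x]

lemma cosh_sub_one_ge (x : ℝ) : x ^ 2 / 2 ≤ Real.cosh x - 1 := by
  have h1 : Real.cosh x = 2 * Real.sinh (x / 2) ^ 2 + 1 := by
    have h2 := Real.cosh_two_mul (x / 2)
    have h3 := Real.cosh_sq (x / 2)
    have h4 : (2 : ℝ) * (x / 2) = x := by ring
    rw [h4] at h2
    rw [h2, h3]; ring
  have h4 := sq_le_sinh_sq (x / 2)
  nlinarith

set_option maxHeartbeats 4000000 in
/-- Exponential decay of the Biot–Savart kernel on the cylinder: there are `C1, C2 > 0`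
such that `|∂G/∂x₂(x,y)| ≤ (C1/|x-y|) exp(-C2 |x-y|)` for all `x ≠ y` in the strip
`ℝ × [0,2π]`, where `|x-y|` is the cylinder distance. -/
theorem kernel_decay :
    ∃ C1 > (0 : ℝ), ∃ C2 > (0 : ℝ), ∀ x1 x2 y1 y2 : ℝ,
      x2 ∈ Set.Icc 0 (2 * Real.pi) → y2 ∈ Set.Icc 0 (2 * Real.pi) →
      0 < Real.cosh (x1 - y1) - Real.cos (x2 - y2) →
      |Real.sin (x2 - y2)| / (2 * (Real.cosh (x1 - y1) - Real.cos (x2 - y2))) ≤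
        C1 / cylDist x1 x2 y1 y2 * Real.exp (-C2 * cylDist x1 x2 y1 y2) := by
  refine ⟨100, by norm_num, 1/2, by norm_num, ?_⟩
  intro x1 x2 y1 y2 _ _ hD
  have hπ : (0:ℝ) < π := Real.pi_pos
  have hπ4 : π ≤ 4 := Real.pi_le_four
  have hπ3 : (3:ℝ) < π := by
    have := Real.pi_gt_three
    linarith
  have hπ315 : π < 3.15 := Real.pi_lt_d2
  have hπsq : π ^ 2 ≤ 10 := by nlinarith
  set a := x1 - y1 with ha
  set b := x2 - y2 with hb
  set k : ℤ := round ((2 * π)⁻¹ * b) with hk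
  set b' : ℝ := b - (k : ℝ) * (2 * π) with hb'
  set t : ℝ := |b'| with htdef
  -- the circle distance equals t
  have hdist : dist (x2 : AddCircle (2 * π)) (y2 : AddCircle (2 * π)) = t := by
    rw [dist_eq_norm, ← AddCircle.coe_sub, AddCircle.norm_eq]
  -- t ≤ π
  have htπ : t ≤ π := by
    have h1 : |((2 * π)⁻¹ * b) - (k : ℝ)| ≤ 1 / 2 := abs_sub_round _
    have h2 : b' = (2 * π) * (((2 * π)⁻¹ * b) - (k : ℝ)) := by
      rw [hb']; field_simp
    have h3 : t = (2 * π) * |((2 * π)⁻¹ * b) - (k : ℝ)| := by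
      rw [htdef, h2, abs_mul, abs_of_pos (by linarith : (0:ℝ) < 2 * π)]
    rw [h3]
    nlinarith
  have ht0 : 0 ≤ t := abs_nonneg _
  -- |sin b| ≤ t
  have hsin : |Real.sin b| ≤ t := by
    rw [← Real.sin_sub_int_mul_two_pi b k]
    exact Real.abs_sin_le_abs
  -- cos b = cos b'
  have hcos : Real.cos b = Real.cos b' := (Real.cos_sub_int_mul_two_pi b k).symm
  clear_value a b k b' t
  -- B := 1 - cos b ≥ 2 t² / π²
  have hB : 2 * t ^ 2 / π ^ 2 ≤ 1 - Real.cos b := by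
    have h1 : Real.cos b' = 1 - 2 * Real.sin (b' / 2) ^ 2 := by
      have h2 := Real.cos_two_mul (b' / 2)
      have h3 := Real.cos_sq' (b' / 2)
      have h4 : (2 : ℝ) * (b' / 2) = b' := by ring
      rw [h4] at h2
      rw [h2, h3]; ring
    have h5 : 2 / π * |b' / 2| ≤ |Real.sin (b' / 2)| := by
      apply Real.mul_abs_le_abs_sin
      rw [abs_div, abs_of_pos (by norm_num : (0:ℝ) < 2),
        div_le_div_iff₀ (by norm_num) (by norm_num : (0:ℝ) < 2)]
      calc |b'| * 2 = 2 * t := by rw [htdef]; ring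
        _ ≤ 2 * π := by linarith
        _ = π * 2 := by ring
    have h6 : (2 / π * |b' / 2|) ^ 2 ≤ Real.sin (b' / 2) ^ 2 := by
      have hu : (0:ℝ) ≤ 2 / π * |b' / 2| := by positivity
      have h6a := mul_le_mul h5 h5 hu (abs_nonneg _)
      have h6b := sq_abs (Real.sin (b' / 2))
      nlinarith
    have h7 : |b' / 2| ^ 2 = t ^ 2 / 4 := by
      rw [abs_div, abs_of_pos (by norm_num : (0:ℝ) < 2), ← htdef]
      ring
    have h8 : (2 / π) ^ 2 * (t ^ 2 / 4) ≤ Real.sin (b' / 2) ^ 2 := by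
      calc (2 / π) ^ 2 * (t ^ 2 / 4) = (2 / π * |b' / 2|) ^ 2 := by rw [mul_pow, h7]
        _ ≤ _ := h6
    have h9 : (2 / π) ^ 2 * (t ^ 2 / 4) = t ^ 2 / π ^ 2 := by
      field_simp; ring
    rw [h9] at h8
    have h10 : 2 * t ^ 2 / π ^ 2 = 2 * (t ^ 2 / π ^ 2) := by ring
    rw [hcos, h1, h10]
    linarith
  -- A := cosh a - 1 ≥ a²/2
  have hA : a ^ 2 / 2 ≤ Real.cosh a - 1 := cosh_sub_one_ge a
  have hcos1 : Real.cos b ≤ 1 := Real.cos_le_one b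
  -- the distance d
  set d : ℝ := cylDist x1 x2 y1 y2 with hd
  have hd2 : d ^ 2 = a ^ 2 + t ^ 2 := by
    rw [hd, cylDist, hdist, ← ha]
    exact Real.sq_sqrt (by positivity)
  have hd0 : 0 ≤ d := by rw [hd]; exact Real.sqrt_nonneg _
  clear_value d
  clear hdist hd hk hb'
  have hdpos : 0 < d := by
    rcases hd0.lt_or_eq with h | h
    · exact h
    · exfalso
      have h0 : a ^ 2 + t ^ 2 = 0 := by rw [← hd2, ← h]; ring
      have ha0 : a = 0 := by
        have : a ^ 2 = 0 := by nlinarith [sq_nonneg a, sq_nonneg t]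
        exact pow_eq_zero_iff (by norm_num) |>.1 this
      have ht0' : t = 0 := by
        have : t ^ 2 = 0 := by nlinarith [sq_nonneg a, sq_nonneg t]
        exact pow_eq_zero_iff (by norm_num) |>.1 this
      rw [htdef] at ht0'
      have hb0 : b' = 0 := abs_eq_zero.1 ht0'
      have hc1 : Real.cos b = 1 := by rw [hcos, hb0, Real.cos_zero]
      rw [hc1, ha0, Real.cosh_zero] at hD
      norm_num at hD
  have htd : t ≤ d := by nlinarith [sq_nonneg a, sq_nonneg (d - t), sq_nonneg (d + t)]
  -- exp bounds
  have he1 : Real.exp 1 < 2.7182818286 := Real.exp_one_lt_d9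
  have he1' : (2.7182818283 : ℝ) < Real.exp 1 := Real.exp_one_gt_d9
  have hexp2 : Real.exp 2 ≤ 8 := by
    have h1 : Real.exp 2 = Real.exp 1 * Real.exp 1 := by
      rw [← Real.exp_add]; norm_num
    rw [h1]
    nlinarith [Real.exp_pos 1]
  -- cosh lower bound by exp
  have hcoshexp : Real.exp |a| / 2 ≤ Real.cosh a := by
    rw [← Real.cosh_abs, Real.cosh_eq]
    have := Real.exp_pos (-|a|)
    linarith
  set D : ℝ := Real.cosh a - Real.cos b with hDdef
  have hDpos : 0 < D := hD
  clear_value D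
  have hDd : 2 / π ^ 2 * d ^ 2 ≤ D := by
    have h1 : 2 * a ^ 2 / π ^ 2 ≤ a ^ 2 / 2 := by
      rw [div_le_div_iff₀ (by positivity) (by norm_num)]
      have h9 : (9:ℝ) ≤ π ^ 2 := by nlinarith
      nlinarith [mul_le_mul_of_nonneg_left h9 (sq_nonneg a), sq_nonneg a]
    have h2 : D = (Real.cosh a - 1) + (1 - Real.cos b) := by rw [hDdef]; ring
    rw [h2]
    calc 2 / π ^ 2 * d ^ 2 = 2 * a ^ 2 / π ^ 2 + 2 * t ^ 2 / π ^ 2 := by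
          rw [hd2]; ring
      _ ≤ a ^ 2 / 2 + 2 * t ^ 2 / π ^ 2 := by linarith
      _ ≤ _ := by linarith
  -- rewrite the goal
  have hgoal : -(1/2 : ℝ) * d = -(d/2) := by ring
  rw [hgoal, Real.exp_neg]
  set E : ℝ := Real.exp (d / 2) with hE
  have hEpos : 0 < E := by rw [hE]; exact Real.exp_pos _
  have hrw : (100:ℝ) / d * E⁻¹ = 100 / (d * E) := by
    field_simp
  rw [hrw, div_le_div_iff₀ (by positivity) (by positivity)]
  clear_value E
  clear hB hA hcos hb ha hrw htdef hgoal hD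
  -- goal : |sin b| * (d * E) ≤ 100 * (2 * D)
  have hmain : |Real.sin b| * (d * E) ≤ 200 * D := by
    rcases le_or_gt |a| 1 with hcase | hcase
    · -- small |a|
      have hd4 : d ≤ 4 := by
        have h1 : d ^ 2 ≤ 1 + π ^ 2 := by
          rw [hd2]
          have h2 : a ^ 2 ≤ 1 := by nlinarith [abs_nonneg a, sq_abs a]
          nlinarith
        nlinarith [sq_nonneg (d - 4)]
      have hE8 : E ≤ 8 := by
        rw [hE]
        calc Real.exp (d / 2) ≤ Real.exp 2 := Real.exp_le_exp.2 (by linarith)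
          _ ≤ 8 := hexp2
      have hsd : |Real.sin b| ≤ d := le_trans hsin htd
      have hDd' : 2 * d ^ 2 ≤ D * π ^ 2 := by
        rw [div_mul_eq_mul_div, div_le_iff₀ (by positivity)] at hDd
        linarith
      have hDπ : D * π ^ 2 ≤ D * 10 := mul_le_mul_of_nonneg_left hπsq hDpos.le
      nlinarith [abs_nonneg (Real.sin b),
        mul_le_mul hsd (mul_le_mul le_rfl hE8 hEpos.le hd0) (by positivity) hd0]
    · -- large |a|
      have hDe : Real.exp |a| / 8 ≤ D := by
        have h1 : Real.exp 1 ≤ Real.exp |a| := Real.exp_le_exp.2 hcase.le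
        have h2 : Real.exp |a| / 2 - 1 ≤ D := by
          rw [hDdef]
          linarith
        nlinarith
      have hsq : (d * Real.exp (|a| / 2)) ^ 2 ≤ (2 * π * D) ^ 2 := by
        have h1 : Real.exp (|a| / 2) ^ 2 = Real.exp |a| := by
          rw [sq, ← Real.exp_add]; ring_nf
        have h2 : (d * Real.exp (|a| / 2)) ^ 2 = d ^ 2 * Real.exp |a| := by
          rw [mul_pow, h1]
        rw [h2]
        have h4 : (2 * π * D) ^ 2 = 4 * π ^ 2 * D ^ 2 := by ring
        rw [h4]
        have h5 : (2 / π ^ 2 * d ^ 2) * (Real.exp |a| / 8) ≤ D * D :=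
          mul_le_mul hDd hDe (by positivity) hDpos.le
        have h6 : (2 / π ^ 2 * d ^ 2) * (Real.exp |a| / 8) =
            d ^ 2 * Real.exp |a| / (4 * π ^ 2) := by
          field_simp; ring
        rw [h6, div_le_iff₀ (by positivity)] at h5
        nlinarith [sq_nonneg D]
      have hlin : d * Real.exp (|a| / 2) ≤ 2 * π * D := by
        have h1 := Real.sqrt_le_sqrt hsq
        rwa [Real.sqrt_sq (by positivity), Real.sqrt_sq (by positivity)] at h1
      have hdab : d ≤ |a| + π := by
        have h1 : d ^ 2 ≤ (|a| + π) ^ 2 := by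
          rw [hd2]
          have h2 : a ^ 2 = |a| ^ 2 := (sq_abs a).symm
          nlinarith [abs_nonneg a]
        nlinarith [abs_nonneg a]
      have hEbound : E ≤ 8 * Real.exp (|a| / 2) := by
        rw [hE]
        calc Real.exp (d / 2) ≤ Real.exp ((|a| + π) / 2) := Real.exp_le_exp.2 (by linarith)
          _ = Real.exp (|a| / 2) * Real.exp (π / 2) := by
              rw [← Real.exp_add]; ring_nf
          _ ≤ Real.exp (|a| / 2) * Real.exp 2 :=
              mul_le_mul_of_nonneg_left (Real.exp_le_exp.2 (by linarith)) (Real.exp_pos _).le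
          _ ≤ 8 * Real.exp (|a| / 2) := by
              nlinarith [Real.exp_pos (|a| / 2)]
      have hsπ : |Real.sin b| ≤ π := le_trans hsin htπ
      calc |Real.sin b| * (d * E)
          ≤ π * (d * (8 * Real.exp (|a| / 2))) :=
            mul_le_mul hsπ (mul_le_mul_of_nonneg_left hEbound hd0) (by positivity) hπ.le
        _ = 8 * π * (d * Real.exp (|a| / 2)) := by ring
        _ ≤ 8 * π * (2 * π * D) := mul_le_mul_of_nonneg_left hlin (by positivity)
        _ = 16 * π ^ 2 * D := by ring
        _ ≤ 200 * D := by
            nlinarith [mul_le_mul_of_nonneg_right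
              (show (16:ℝ) * π ^ 2 ≤ 200 by nlinarith) hDpos.le]
  linarith
end

section
/- Let μ: [0,∞) × ℝ_{>0} × ℝ_{>0} → [0, M₀] satisfy μ_t(R,h) ≤ μ_0(R,h) + (C/h²) ∫_0^t μ_s(R−h, h) ds for all t > 0 and all R ≥ 2h > 0, together with 0 ≤ μ_t(R,h) ≤ M₀. Fix n ∈ ℕ, n ≥ 1, h > 0 and R₀ with R₀ − n h ≥ 2h, and suppose μ_0(R₀ − jh, h) = 0 for all j = 1, …, n. Then μ_t(R₀ − h, h) ≤ (1/n!) (C t / h²)^n M₀ for all t > 0. -/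
open MeasureTheory intervalIntegral

/-- Abstract iteration lemma: if `μ_t(R,h) ≤ μ_0(R,h) + (C/h²)∫_0^t μ_s(R-h,h) ds`
with `0 ≤ μ ≤ M₀`, and `μ_0(R₀ - jh, h) = 0` for `j = 1,…,n`, then
`μ_t(R₀ - h, h) ≤ (1/n!)(Ct/h²)^n M₀`. -/
theorem iteration_lemma
    (μ : ℝ → ℝ → ℝ → ℝ) (C M₀ : ℝ) (hC : 0 < C) (hM₀ : 0 < M₀)
    (hbounds : ∀ t R h, 0 ≤ μ t R h ∧ μ t R h ≤ M₀)
    (hcont : ∀ R h, Continuous fun t => μ t R h)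
    (hineq : ∀ t > (0 : ℝ), ∀ R h : ℝ, 0 < h → 2 * h ≤ R →
      μ t R h ≤ μ 0 R h + C / h ^ 2 * ∫ s in (0:ℝ)..t, μ s (R - h) h)
    (n : ℕ) (hn : 1 ≤ n) (h R₀ : ℝ) (hh : 0 < h) (hR : 2 * h ≤ R₀ - n * h)
    (hzero : ∀ j : ℕ, 1 ≤ j → j ≤ n → μ 0 (R₀ - j * h) h = 0) :
    ∀ t > (0 : ℝ), μ t (R₀ - h) h ≤ (1 / n.factorial) * (C * t / h ^ 2) ^ n * M₀ := by
  have h2 : (0:ℝ) < h ^ 2 := by positivity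
  have key : ∀ m : ℕ, m + 1 ≤ n → ∀ t > (0:ℝ),
      μ t (R₀ - ((n - m : ℕ) : ℝ) * h) h
        ≤ (C * t / h ^ 2) ^ (m + 1) / (m + 1).factorial * M₀ := by
    intro m
    induction m with
    | zero =>
      intro h1 t ht
      have hRn : 2 * h ≤ R₀ - (n:ℝ) * h := hR
      have := hineq t ht (R₀ - (n:ℝ) * h) h hh (by linarith)
      have h0 : μ 0 (R₀ - (n:ℝ) * h) h = 0 := hzero n hn le_rfl
      have hint : (∫ s in (0:ℝ)..t, μ s (R₀ - (n:ℝ) * h - h) h) ≤ t * M₀ := by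
        calc (∫ s in (0:ℝ)..t, μ s (R₀ - (n:ℝ) * h - h) h)
            ≤ ∫ s in (0:ℝ)..t, M₀ := by
              apply intervalIntegral.integral_mono_on ht.le
              · exact ((hcont _ _).intervalIntegrable _ _)
              · exact intervalIntegrable_const
              · intro s _; exact (hbounds s _ h).2
          _ = t * M₀ := by simp [mul_comm]
      have : μ t (R₀ - (n:ℝ) * h) h ≤ C / h ^ 2 * (t * M₀) := by
        rw [h0] at this
        calc μ t (R₀ - (n:ℝ) * h) h ≤ 0 + C / h ^ 2 * ∫ s in (0:ℝ)..t,
              μ s (R₀ - (n:ℝ) * h - h) h := this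
          _ ≤ C / h ^ 2 * (t * M₀) := by
              rw [zero_add]
              exact mul_le_mul_of_nonneg_left hint (by positivity)
      simpa [Nat.factorial, div_pow, mul_pow] using this.trans_eq (by ring)
    | succ m ih =>
      intro hm2 t ht
      have hm1 : m + 1 ≤ n := by omega
      have ihm := ih hm1
      -- j = n - (m+1)
      have hj1 : 1 ≤ n - (m + 1) := by omega
      have hjn : n - (m + 1) ≤ n := by omega
      have hjcast : ((n - (m + 1) : ℕ) : ℝ) = (n : ℝ) - ((m : ℝ) + 1) := by
        rw [Nat.cast_sub (by omega : m + 1 ≤ n)]; push_cast; ring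
      have hjcast' : ((n - m : ℕ) : ℝ) = (n : ℝ) - m := by
        rw [Nat.cast_sub (by omega)]
      set R : ℝ := R₀ - ((n - (m+1) : ℕ) : ℝ) * h with hRdef
      have hjle : ((n - (m+1) : ℕ) : ℝ) ≤ (n : ℝ) := by exact_mod_cast hjn
      have h2R : 2 * h ≤ R := by
        have : ((n - (m+1) : ℕ) : ℝ) * h ≤ (n:ℝ) * h :=
          mul_le_mul_of_nonneg_right hjle hh.le
        dsimp [R]; linarith
      have h0 : μ 0 R h = 0 := hzero _ hj1 hjn
      have hRh : R - h = R₀ - ((n - m : ℕ) : ℝ) * h := by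
        rw [hRdef, hjcast, hjcast']; ring
      have hineq' := hineq t ht R h hh h2R
      rw [h0, zero_add, hRh] at hineq'
      have hptw : ∀ s ∈ Set.Icc (0:ℝ) t, μ s (R₀ - ((n - m : ℕ) : ℝ) * h) h
          ≤ (C * s / h ^ 2) ^ (m + 1) / (m + 1).factorial * M₀ := by
        intro s hs
        rcases eq_or_lt_of_le hs.1 with rfl | hs0
        · rw [hzero _ (by omega) (by omega)]
          positivity
        · exact ihm s hs0
      have hint : (∫ s in (0:ℝ)..t, μ s (R₀ - ((n - m : ℕ) : ℝ) * h) h)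
          ≤ (C / h ^ 2) ^ (m + 1) / (m + 1).factorial * M₀ * (t ^ (m + 2) / (m + 2)) := by
        calc (∫ s in (0:ℝ)..t, μ s (R₀ - ((n - m : ℕ) : ℝ) * h) h)
            ≤ ∫ s in (0:ℝ)..t, (C * s / h ^ 2) ^ (m + 1) / (m + 1).factorial * M₀ := by
              apply intervalIntegral.integral_mono_on ht.le
              · exact ((hcont _ _).intervalIntegrable _ _)
              · apply Continuous.intervalIntegrable; continuity
              · exact hptw
          _ = (C / h ^ 2) ^ (m + 1) / (m + 1).factorial * M₀ * (t ^ (m + 2) / (m + 2)) := by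
              have heq : ∀ s : ℝ, (C * s / h ^ 2) ^ (m + 1) / (m + 1).factorial * M₀
                  = ((C / h ^ 2) ^ (m + 1) / (m + 1).factorial * M₀) * s ^ (m + 1) := by
                intro s; rw [mul_div_assoc, mul_pow]; ring
              simp_rw [heq]
              rw [intervalIntegral.integral_const_mul, integral_pow,
                zero_pow (by omega : m + 1 + 1 ≠ 0), sub_zero]
              push_cast
              ring
      calc μ t R h ≤ C / h ^ 2 * ∫ s in (0:ℝ)..t, μ s (R₀ - ((n - m : ℕ) : ℝ) * h) h := hineq'
        _ ≤ C / h ^ 2 * ((C / h ^ 2) ^ (m + 1) / (m + 1).factorial * M₀ * (t ^ (m + 2) / (m + 2))) :=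
            mul_le_mul_of_nonneg_left hint (by positivity)
        _ = (C * t / h ^ 2) ^ (m + 2) / (m + 2).factorial * M₀ := by
            have hfs : ((m+2).factorial : ℝ) = ((m:ℝ)+2) * ((m+1).factorial : ℝ) := by
              rw [show m+2 = (m+1)+1 from rfl, Nat.factorial_succ]; push_cast; ring
            have hf : ((m+1).factorial : ℝ) ≠ 0 := by positivity
            rw [hfs, div_pow, div_pow, mul_pow]
            field_simp
            ring
  intro t ht
  have := key (n - 1) (by omega) t ht
  have e1 : n - (n - 1) = 1 := by omega
  have e2 : n - 1 + 1 = n := by omega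
  rw [e1, e2] at this
  simpa [Nat.cast_one, one_mul, div_eq_mul_inv, mul_comm, mul_assoc, mul_left_comm] using this
end
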